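/- arXiv:1012.0948 — 4 statements merged into one kernel-verified Lean document; each statement's English description precedes it below -/
import Mathlib

section
/- For 1 < p ≤ 2, set p* = p/(p-1) (so p* - 1 = 1/(p-1)) and α_p = p(1 - 1/p*)^{p-1}. Then for all real s, t ≥ 0, one has t^p - (p*-1)^p s^p ≤ α_p (t - (p*-1)s)(s+t)^{p-1}. -/
/-!
Both sides are positively homogeneous of degree `p` in `(s, t)`, so we may take `s + t = 1`
and `t = x ∈ [0, 1]`. With `c = 1/(p-1)` and `α = p (1/p)^(p-1)`, the gap
`G x = α (x - c(1-x)) + (c(1-x))^p - x^p` vanishes at `x = 1/p`, and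
`G' x = p (h (1/p) - h x)` for the concave function `h x = x^(p-1) + c (c(1-x))^(p-1)`.
Weighted AM–GM gives `h (1/p) ≤ h 0`; by concavity `h` then stays above `h (1/p)` on
`[0, 1/p]` and below it on `[1/p, 1]`, so `G` decreases and then increases, with minimum `0`.
-/

open Real Set

lemma rpow_two_sub_mul_rpow_sub_one_le_one {p : ℝ} (hp1 : 1 ≤ p) (hp2 : p ≤ 2) :
    p ^ (2 - p) * (p - 1) ^ (p - 1) ≤ 1 :=
  (geom_mean_le_arith_mean2_weighted (by linarith) (by linarith) (by linarith) (by linarith)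
    (by ring)).trans_eq (by ring)

lemma mul_inv_rpow_le_inv_rpow {p : ℝ} (hp1 : 1 < p) (hp2 : p ≤ 2) :
    p * p⁻¹ ^ (p - 1) ≤ (p - 1)⁻¹ ^ (p - 1) := by
  have hp0 : 0 < p := by linarith
  have hq0 : 0 < p - 1 := by linarith
  have h := rpow_two_sub_mul_rpow_sub_one_le_one hp1.le hp2
  rw [inv_rpow hp0.le, inv_rpow hq0.le, ← div_eq_mul_inv, div_le_iff₀ (by positivity),
    inv_mul_eq_div, le_div_iff₀ (by positivity)]
  calc p * (p - 1) ^ (p - 1) = p ^ (2 - p) * (p - 1) ^ (p - 1) * p ^ (p - 1) := by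
        rw [mul_right_comm, ← rpow_add hp0]; norm_num
    _ ≤ p ^ (p - 1) := mul_le_of_le_one_left (by positivity) h

lemma concaveOn_rpow_add_mul_rpow_mul_one_sub {q c : ℝ} (hq0 : 0 ≤ q) (hq1 : q ≤ 1)
    (hc : 0 ≤ c) : ConcaveOn ℝ (Icc 0 1) fun x => x ^ q + c * (c * (1 - x)) ^ q := by
  have hpow := concaveOn_rpow hq0 hq1
  have hline (x : ℝ) : AffineMap.lineMap c 0 x = c * (1 - x) := by
    rw [AffineMap.lineMap_apply_ring]; ring
  have hcomp : ConcaveOn ℝ (Icc 0 1) fun x => (c * (1 - x)) ^ q := by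
    refine ((hpow.comp_affineMap (AffineMap.lineMap c 0)).subset (fun x hx => ?_)
      (convex_Icc 0 1)).congr fun x _ => by simp only [Function.comp_apply, hline]
    simpa only [mem_preimage, hline, mem_Ici] using mul_nonneg hc (sub_nonneg.2 hx.2)
  exact (hpow.subset Icc_subset_Ici_self (convex_Icc 0 1)).add (hcomp.smul hc)

lemma ConcaveOn.apply_le_of_apply_le_left {s : Set ℝ} {f : ℝ → ℝ} {a m x : ℝ}
    (hf : ConcaveOn ℝ s f) (ha : a ∈ s) (hx : x ∈ s) (ham : a < m) (hmx : m ≤ x)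
    (hfa : f m ≤ f a) : f x ≤ f m := by
  rcases hmx.eq_or_lt with rfl | hmx
  · exact le_rfl
  have hslope : (f x - f m) / (x - m) ≤ 0 :=
    (hf.slope_anti_adjacent ha hx ham hmx).trans
      (div_nonpos_of_nonpos_of_nonneg (sub_nonpos.2 hfa) (sub_nonneg.2 ham.le))
  have := (div_le_iff₀ (sub_pos.2 hmx)).1 hslope
  linarith

lemma isMinOn_Icc_of_hasDerivAt_of_concaveOn {G h : ℝ → ℝ} {k a m b : ℝ} (hk : 0 ≤ k)
    (hG : ∀ y, HasDerivAt G (k * (h m - h y)) y) (hh : ConcaveOn ℝ (Icc a b) h)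
    (ham : a < m) (hmb : m ≤ b) (hhm : h m ≤ h a) : IsMinOn G (Icc a b) m := by
  have hGdiff : Differentiable ℝ G := fun y => (hG y).differentiableAt
  have hGcont : Continuous G := hGdiff.continuous
  have ha : a ∈ Icc a b := left_mem_Icc.2 (ham.le.trans hmb)
  refine isMinOn_Icc_of_deriv hGcont.continuousAt hGcont.continuousAt hGcont.continuousAt
    hGdiff.differentiableOn hGdiff.differentiableOn (fun y hy => ?_) (fun y hy => ?_) <;>
    rw [(hG y).deriv]
  · have := hh.min_le_of_mem_Icc ha ⟨ham.le, hmb⟩ (Ioo_subset_Icc_self hy)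
    rw [min_eq_right hhm] at this
    exact mul_nonpos_of_nonneg_of_nonpos hk (sub_nonpos.2 this)
  · have := hh.apply_le_of_apply_le_left ha ⟨ham.le.trans hy.1.le, hy.2.le⟩ ham hy.1.le hhm
    exact mul_nonneg hk (sub_nonneg.2 this)

lemma burkholder_normalized {p x : ℝ} (hp1 : 1 < p) (hp2 : p ≤ 2) (hx : x ∈ Icc 0 1) :
    x ^ p - ((p - 1)⁻¹ * (1 - x)) ^ p ≤ p * p⁻¹ ^ (p - 1) * (x - (p - 1)⁻¹ * (1 - x)) := by
  have hp0 : 0 < p := by linarith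
  have hq0 : 0 < p - 1 := by linarith
  set c := (p - 1)⁻¹ with hc
  set α := p * p⁻¹ ^ (p - 1) with hα
  set h : ℝ → ℝ := fun y => y ^ (p - 1) + c * (c * (1 - y)) ^ (p - 1) with hh
  set G : ℝ → ℝ := fun y => α * (y - c * (1 - y)) + (c * (1 - y)) ^ p - y ^ p with hG
  have hcm : c * (1 - p⁻¹) = p⁻¹ := by rw [hc]; field_simp
  have hG' (y : ℝ) : HasDerivAt G (p * (h p⁻¹ - h y)) y := by
    have hlin : HasDerivAt (fun y => c * (1 - y)) (-c) y := by
      simpa using ((hasDerivAt_id y).const_sub 1).const_mul c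
    refine ((((hasDerivAt_id y).sub hlin).const_mul α).add (hlin.rpow_const (Or.inr hp1.le))).sub
      (hasDerivAt_rpow_const (Or.inr hp1.le)) |>.congr_deriv ?_
    simp only [hh, hcm, hα]
    ring
  have hGm : G p⁻¹ = 0 := by simp only [hG, hcm]; ring
  have hhm : h p⁻¹ ≤ h 0 := by
    have key := mul_le_mul_of_nonneg_left (mul_inv_rpow_le_inv_rpow hp1 hp2)
      (show 0 ≤ c by positivity)
    have hcp : 1 + c = c * p := by rw [hc]; field_simp; ring
    simp only [hh, hcm, sub_zero, mul_one, zero_rpow hq0.ne', zero_add]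
    calc p⁻¹ ^ (p - 1) + c * p⁻¹ ^ (p - 1) = c * (p * p⁻¹ ^ (p - 1)) := by
          rw [← one_add_mul, hcp, mul_assoc]
      _ ≤ c * c ^ (p - 1) := key
  have hmin : IsMinOn G (Icc 0 1) p⁻¹ :=
    isMinOn_Icc_of_hasDerivAt_of_concaveOn hp0.le hG'
      (concaveOn_rpow_add_mul_rpow_mul_one_sub hq0.le (by linarith) (by positivity))
      (by positivity) (inv_le_one_of_one_le₀ hp1.le) hhm
  have : 0 ≤ G x := hGm ▸ hmin hx
  simp only [hG] at this
  linarith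

/-- One-dimensional Burkholder majorization: for `1 < p ≤ 2`, `p* = p/(p-1)`,
`α_p = p (1 - 1/p*)^(p-1)`, and all `s, t ≥ 0`,
`t^p - (p*-1)^p s^p ≤ α_p (t - (p*-1) s)(s+t)^(p-1)`. -/
theorem stmt_0 (p : ℝ) (hp1 : 1 < p) (hp2 : p ≤ 2)
    (s t : ℝ) (hs : 0 ≤ s) (ht : 0 ≤ t) :
    t ^ p - (p / (p - 1) - 1) ^ p * s ^ p ≤
      p * (1 - 1 / (p / (p - 1))) ^ (p - 1) *
        ((t - (p / (p - 1) - 1) * s) * (s + t) ^ (p - 1)) := by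
  have hp0 : 0 < p := by linarith
  have hq0 : 0 < p - 1 := by linarith
  have hc : p / (p - 1) - 1 = (p - 1)⁻¹ := by field_simp; ring
  have hα : 1 - 1 / (p / (p - 1)) = p⁻¹ := by field_simp; ring
  rw [hc, hα]
  rcases (add_nonneg hs ht).eq_or_lt with hu | hu
  · obtain ⟨rfl, rfl⟩ : s = 0 ∧ t = 0 := ⟨by linarith, by linarith⟩
    simp [zero_rpow hp0.ne', zero_rpow hq0.ne']
  set u := s + t
  have hx : t / u ∈ Icc 0 1 := ⟨by positivity, (div_le_one hu).2 (by linarith)⟩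
  have htu : t / u * u = t := div_mul_cancel₀ t hu.ne'
  have hsu : (p - 1)⁻¹ * (1 - t / u) * u = (p - 1)⁻¹ * s := by field_simp; ring
  calc t ^ p - (p - 1)⁻¹ ^ p * s ^ p
      = ((t / u) ^ p - ((p - 1)⁻¹ * (1 - t / u)) ^ p) * u ^ p := by
        rw [sub_mul, ← mul_rpow hx.1 hu.le,
          ← mul_rpow (mul_nonneg (by positivity) (sub_nonneg.2 hx.2)) hu.le, htu, hsu,
          mul_rpow (by positivity) hs]
    _ ≤ p * p⁻¹ ^ (p - 1) * (t / u - (p - 1)⁻¹ * (1 - t / u)) * u ^ p :=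
        mul_le_mul_of_nonneg_right (burkholder_normalized hp1 hp2 hx) (by positivity)
    _ = p * p⁻¹ ^ (p - 1) * ((t - (p - 1)⁻¹ * s) * u ^ (p - 1)) := by
        rw [rpow_sub_one hu.ne']; field_simp; ring
end

section
/- For 1 < p ≤ 2 and all x, y ∈ ℝ², the inequality ‖y‖^p - (1/(p-1))^p ‖x‖^p ≤ α_p (‖y‖ - (1/(p-1))‖x‖)(‖x‖+‖y‖)^{p-1} holds, where α_p = p(1-1/p*)^{p-1} and p* = p/(p-1). -/
/-!
With `a = ‖x‖`, `b = ‖y‖` and `c = 1/(p-1)`, the constant `α_p` equals `p^(2-p)`, and the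
difference `u - v`, viewed as a function of `b ≥ 0`, vanishes at `b = c a`. Its derivative is
`p b (((a+b)/p)^(p-2) - b^(p-2))`; as `s ↦ s^(p-2)` is antitone for `p ≤ 2` and `b ≤ (a+b)/p`
exactly when `b ≤ c a`, the difference decreases up to `c a` and increases afterwards.
-/

open Real Set

lemma mul_one_sub_one_div_conjExponent_rpow {p : ℝ} (hp : 0 < p) :
    p * (1 - 1 / (p / (p - 1))) ^ (p - 1) = p ^ (2 - p) := by
  have h : 1 - 1 / (p / (p - 1)) = p⁻¹ := by
    rw [one_div, inv_div]
    field_simp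
    ring
  rw [h, inv_rpow hp.le, show 2 - p = 1 - (p - 1) by ring, rpow_sub hp 1 (p - 1), rpow_one,
    div_eq_mul_inv]

namespace Burkholder

noncomputable def gap (p a t : ℝ) : ℝ :=
  p ^ (2 - p) * ((t - 1 / (p - 1) * a) * (a + t) ^ (p - 1)) - (t ^ p - (1 / (p - 1)) ^ p * a ^ p)

variable {p a : ℝ}

lemma continuous_gap (hp : 1 ≤ p) : Continuous (gap p a) := by
  unfold gap
  fun_prop (disch := linarith)

lemma gap_eq_zero (hp : 1 ≤ p) (ha : 0 ≤ a) : gap p a (1 / (p - 1) * a) = 0 := by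
  have hc : 0 ≤ 1 / (p - 1) := one_div_nonneg.mpr (sub_nonneg.mpr hp)
  rw [gap, sub_self, zero_mul, mul_zero, mul_rpow hc ha, sub_self, sub_self]

lemma hasDerivAt_gap (hp0 : 0 < p) (hp1 : p ≠ 1) (ha : 0 ≤ a) {t : ℝ} (ht : 0 < t) :
    HasDerivAt (gap p a) (p * t * (((a + t) / p) ^ (p - 2) - t ^ (p - 2))) t := by
  have hat : 0 < a + t := by linarith
  have hc : (p - 1) * (1 / (p - 1)) = 1 := by
    field_simp [sub_ne_zero.mpr hp1]
  have hpow : HasDerivAt (fun s => (a + s) ^ (p - 1)) ((p - 1) * (a + t) ^ (p - 1 - 1) * 1) t :=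
    (hasDerivAt_rpow_const (Or.inl hat.ne')).comp t ((hasDerivAt_id t).const_add a)
  have h := ((((hasDerivAt_id t).sub_const (1 / (p - 1) * a)).mul hpow).const_mul (p ^ (2 - p))).sub
    ((hasDerivAt_rpow_const (p := p) (Or.inl ht.ne')).sub_const ((1 / (p - 1)) ^ p * a ^ p))
  refine h.congr_deriv ?_
  have hα : ((a + t) / p) ^ (p - 2) = p ^ (2 - p) * (a + t) ^ (p - 2) := by
    rw [div_rpow hat.le hp0.le, show 2 - p = -(p - 2) by ring, rpow_neg hp0.le]
    ring
  rw [hα, show p - 1 - 1 = p - 2 by ring, show p - 1 = p - 2 + 1 by ring,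
    rpow_add_one hat.ne', rpow_add_one ht.ne']
  simp only [id, one_mul, mul_one]
  linear_combination (-p ^ (2 - p) * (a + t) ^ (p - 2) * a) * hc

lemma antitoneOn_gap (hp1 : 1 < p) (hp2 : p ≤ 2) (ha : 0 ≤ a) :
    AntitoneOn (gap p a) (Icc 0 (1 / (p - 1) * a)) := by
  refine antitoneOn_of_hasDerivWithinAt_nonpos
    (f' := fun t => p * t * (((a + t) / p) ^ (p - 2) - t ^ (p - 2))) (convex_Icc _ _)
    (continuous_gap hp1.le).continuousOn (fun t ht => ?_) (fun t ht => ?_) <;>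
    obtain ⟨ht0, htm⟩ := interior_Icc (α := ℝ) ▸ ht
  · exact (hasDerivAt_gap (by linarith) hp1.ne' ha ht0).hasDerivWithinAt
  have hle : t ≤ (a + t) / p := by
    rw [one_div_mul_eq_div, lt_div_iff₀ (by linarith)] at htm
    rw [le_div_iff₀ (by linarith)]
    linarith
  have := rpow_le_rpow_of_nonpos ht0 hle (by linarith : p - 2 ≤ 0)
  exact mul_nonpos_of_nonneg_of_nonpos (by positivity) (by linarith)

lemma monotoneOn_gap (hp1 : 1 < p) (hp2 : p ≤ 2) (ha : 0 ≤ a) :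
    MonotoneOn (gap p a) (Ici (1 / (p - 1) * a)) := by
  have hm : 0 ≤ 1 / (p - 1) * a := mul_nonneg (one_div_pos.mpr (by linarith)).le ha
  refine monotoneOn_of_hasDerivWithinAt_nonneg
    (f' := fun t => p * t * (((a + t) / p) ^ (p - 2) - t ^ (p - 2))) (convex_Ici _)
    (continuous_gap hp1.le).continuousOn (fun t ht => ?_) (fun t ht => ?_) <;>
    rw [interior_Ici, mem_Ioi] at ht <;>
    have ht0 : 0 < t := hm.trans_lt ht
  · exact (hasDerivAt_gap (by linarith) hp1.ne' ha ht0).hasDerivWithinAt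
  have hle : (a + t) / p ≤ t := by
    rw [one_div_mul_eq_div, div_lt_iff₀ (by linarith)] at ht
    rw [div_le_iff₀ (by linarith)]
    linarith
  have := rpow_le_rpow_of_nonpos (by positivity) hle (by linarith : p - 2 ≤ 0)
  exact mul_nonneg (by positivity) (by linarith)

lemma gap_nonneg (hp1 : 1 < p) (hp2 : p ≤ 2) (ha : 0 ≤ a) {t : ℝ} (ht : 0 ≤ t) :
    0 ≤ gap p a t := by
  rw [← gap_eq_zero hp1.le ha]
  rcases le_total t (1 / (p - 1) * a) with htm | htm
  · exact antitoneOn_gap hp1 hp2 ha ⟨ht, htm⟩ ⟨ht.trans htm, le_rfl⟩ htm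
  · exact monotoneOn_gap hp1 hp2 ha self_mem_Ici htm htm

end Burkholder

/-- Burkholder's majorization `v ≤ u` in ℝ²: for `1 < p ≤ 2` and all `x, y ∈ ℝ²`,
`‖y‖^p - (1/(p-1))^p ‖x‖^p ≤ α_p (‖y‖ - (1/(p-1))‖x‖)(‖x‖+‖y‖)^(p-1)`,
where `α_p = p (1 - 1/p*)^(p-1)` with `p* = p/(p-1)`. -/
theorem stmt_4 (p : ℝ) (hp1 : 1 < p) (hp2 : p ≤ 2)
    (x y : EuclideanSpace ℝ (Fin 2)) :
    ‖y‖ ^ p - (1 / (p - 1)) ^ p * ‖x‖ ^ p ≤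
      p * (1 - 1 / (p / (p - 1))) ^ (p - 1) *
        ((‖y‖ - (1 / (p - 1)) * ‖x‖) * (‖x‖ + ‖y‖) ^ (p - 1)) := by
  rw [mul_one_sub_one_div_conjExponent_rpow (by linarith)]
  exact sub_nonneg.mp (Burkholder.gap_nonneg hp1 hp2 (norm_nonneg x) (norm_nonneg y))
end

section
/- Let 1 < p ≤ 2 and define u(x,y) = α_p(‖y‖ - (1/(p-1))‖x‖)(‖x‖+‖y‖)^{p-1} on ℝ²×ℝ² with α_p = p^{2-p}. Then for any x, y, h, k ∈ ℝ² with x ≠ 0, y ≠ 0, ‖k‖ ≤ ‖h‖, the function G(t) = u(x+th, y+tk) satisfies G''(0) ≤ 0. -/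
/-!
Write `q = p - 1`, `a = ‖x‖`, `b = ‖y‖`. Near `t = 0` the maps `t ↦ ‖x + t • h‖` and
`t ↦ ‖y + t • k‖` are smooth, with first derivatives `f₁ = ⟪x, h⟫ / a`, `g₁ = ⟪y, k⟫ / b` and
second derivatives `f₂ = (‖h‖² - f₁²) / a ≥ 0`, `g₂ = (‖k‖² - g₁²) / b`, so the chain and product
rules give `G''(0) = p^(2-p) (a + b)^(q-2) Q` for a polynomial `Q` in `a, b, f₁, g₁, f₂, g₂, 1/q`.
The identity
`q Q = -(q(1+q)(a+b)(‖h‖² - ‖k‖²) + (1-q²)(a+b)² f₂ + q(1-q²) b (f₁+g₁)²)`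
exhibits `-q Q` as a sum of three nonnegative terms when `0 < q ≤ 1` and `‖k‖ ≤ ‖h‖`.
-/

open Filter Topology RealInnerProductSpace

def HasSecondDerivAt (f : ℝ → ℝ) (f₁ f₂ t : ℝ) : Prop :=
  ∃ f' : ℝ → ℝ, (∀ᶠ s in 𝓝 t, HasDerivAt f (f' s) s) ∧ f' t = f₁ ∧ HasDerivAt f' f₂ t

namespace HasSecondDerivAt

variable {f g : ℝ → ℝ} {f₁ f₂ g₁ g₂ t : ℝ}

theorem hasDerivAt (hf : HasSecondDerivAt f f₁ f₂ t) : HasDerivAt f f₁ t := by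
  obtain ⟨f', hf', rfl, -⟩ := hf
  exact hf'.self_of_nhds

theorem deriv_deriv (hf : HasSecondDerivAt f f₁ f₂ t) : deriv (deriv f) t = f₂ := by
  obtain ⟨f', hf', -, hf''⟩ := hf
  rw [EventuallyEq.deriv_eq (hf'.mono fun s hs => hs.deriv), hf''.deriv]

theorem add (hf : HasSecondDerivAt f f₁ f₂ t) (hg : HasSecondDerivAt g g₁ g₂ t) :
    HasSecondDerivAt (fun s => f s + g s) (f₁ + g₁) (f₂ + g₂) t := by
  obtain ⟨f', hf', rfl, hf''⟩ := hf
  obtain ⟨g', hg', rfl, hg''⟩ := hg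
  exact ⟨fun s => f' s + g' s, hf'.and hg' |>.mono fun s hs => hs.1.add hs.2, rfl,
    hf''.add hg''⟩

theorem sub (hf : HasSecondDerivAt f f₁ f₂ t) (hg : HasSecondDerivAt g g₁ g₂ t) :
    HasSecondDerivAt (fun s => f s - g s) (f₁ - g₁) (f₂ - g₂) t := by
  obtain ⟨f', hf', rfl, hf''⟩ := hf
  obtain ⟨g', hg', rfl, hg''⟩ := hg
  exact ⟨fun s => f' s - g' s, hf'.and hg' |>.mono fun s hs => hs.1.sub hs.2, rfl,
    hf''.sub hg''⟩

theorem const_mul (c : ℝ) (hf : HasSecondDerivAt f f₁ f₂ t) :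
    HasSecondDerivAt (fun s => c * f s) (c * f₁) (c * f₂) t := by
  obtain ⟨f', hf', rfl, hf''⟩ := hf
  exact ⟨fun s => c * f' s, hf'.mono fun s hs => hs.const_mul c, rfl, hf''.const_mul c⟩

theorem mul (hf : HasSecondDerivAt f f₁ f₂ t) (hg : HasSecondDerivAt g g₁ g₂ t) :
    HasSecondDerivAt (fun s => f s * g s) (f₁ * g t + f t * g₁)
      (f₂ * g t + 2 * f₁ * g₁ + f t * g₂) t := by
  have hf₁ := hf.hasDerivAt
  have hg₁ := hg.hasDerivAt
  obtain ⟨f', hf', rfl, hf''⟩ := hf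
  obtain ⟨g', hg', rfl, hg''⟩ := hg
  refine ⟨fun s => f' s * g s + f s * g' s,
    hf'.and hg' |>.mono fun s hs => hs.1.mul hs.2, rfl, ?_⟩
  refine ((hf''.mul hg₁).add (hf₁.mul hg'')).congr_deriv ?_
  ring

theorem comp {φ : ℝ → ℝ} {φ₁ φ₂ : ℝ} (hφ : HasSecondDerivAt φ φ₁ φ₂ (f t))
    (hf : HasSecondDerivAt f f₁ f₂ t) :
    HasSecondDerivAt (fun s => φ (f s)) (φ₁ * f₁) (φ₂ * f₁ ^ 2 + φ₁ * f₂) t := by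
  have hf₁ := hf.hasDerivAt
  obtain ⟨φ', hφ', rfl, hφ''⟩ := hφ
  obtain ⟨f', hf', rfl, hf''⟩ := hf
  have hφ'f : ∀ᶠ s in 𝓝 t, HasDerivAt φ (φ' (f s)) (f s) :=
    hf₁.continuousAt.tendsto.eventually hφ'
  refine ⟨fun s => φ' (f s) * f' s,
    hφ'f.and hf' |>.mono fun s hs => hs.1.comp s hs.2, rfl, ?_⟩
  refine ((hφ''.comp t hf₁).mul hf'').congr_deriv ?_
  rw [Function.comp_apply]
  ring

end HasSecondDerivAt

theorem hasSecondDerivAt_rpow_const {a : ℝ} (q : ℝ) (ha : 0 < a) :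
    HasSecondDerivAt (fun u => u ^ q) (q * a ^ (q - 1)) (q * (q - 1) * a ^ (q - 2)) a := by
  refine ⟨fun u => q * u ^ (q - 1), ?_, rfl, ?_⟩
  · filter_upwards [lt_mem_nhds ha] with u hu
    exact Real.hasDerivAt_rpow_const (Or.inl hu.ne')
  · refine ((Real.hasDerivAt_rpow_const (Or.inl ha.ne')).const_mul q).congr_deriv ?_
    rw [sub_sub, one_add_one_eq_two, mul_assoc]

theorem HasSecondDerivAt.rpow_const {f : ℝ → ℝ} {f₁ f₂ t : ℝ} (q : ℝ)
    (hf : HasSecondDerivAt f f₁ f₂ t) (hpos : 0 < f t) :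
    HasSecondDerivAt (fun s => f s ^ q) (q * f t ^ (q - 1) * f₁)
      (q * (q - 1) * f t ^ (q - 2) * f₁ ^ 2 + q * f t ^ (q - 1) * f₂) t :=
  (hasSecondDerivAt_rpow_const q hpos).comp hf

theorem burkholder_second_variation_nonpos {q a b f₁ g₁ f₂ g₂ : ℝ} (hq0 : 0 < q) (hq1 : q ≤ 1)
    (ha : 0 < a) (hb : 0 < b) (hf₂ : 0 ≤ f₂) (hgf : g₁ ^ 2 + b * g₂ ≤ f₁ ^ 2 + a * f₂) :
    (g₂ - 1 / q * f₂) * (a + b) ^ q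
        + 2 * (g₁ - 1 / q * f₁) * (q * (a + b) ^ (q - 1) * (f₁ + g₁))
        + (b - 1 / q * a) * (q * (q - 1) * (a + b) ^ (q - 2) * (f₁ + g₁) ^ 2
          + q * (a + b) ^ (q - 1) * (f₂ + g₂)) ≤ 0 := by
  set r := a + b with hr_def
  have hr : 0 < r := by positivity
  set Q := (g₂ - 1 / q * f₂) * r ^ 2 + 2 * q * (g₁ - 1 / q * f₁) * (f₁ + g₁) * r
      + (b - 1 / q * a) * (q * (q - 1) * (f₁ + g₁) ^ 2 + q * r * (f₂ + g₂)) with hQ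
  have hsplit : (g₂ - 1 / q * f₂) * r ^ q
        + 2 * (g₁ - 1 / q * f₁) * (q * r ^ (q - 1) * (f₁ + g₁))
        + (b - 1 / q * a) * (q * (q - 1) * r ^ (q - 2) * (f₁ + g₁) ^ 2
          + q * r ^ (q - 1) * (f₂ + g₂)) = r ^ (q - 2) * Q := by
    have e₁ : r ^ q = r ^ (q - 2) * r ^ 2 := by
      rw [← Real.rpow_natCast, ← Real.rpow_add hr]; norm_num
    have e₂ : r ^ (q - 1) = r ^ (q - 2) * r := by
      rw [← Real.rpow_add_one hr.ne']; ring_nf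
    rw [e₁, e₂]; ring
  -- The three terms are the paper's `A`, `B`, `C`.
  have hdecomp : q * Q = -(q * (1 + q) * r * (f₁ ^ 2 + a * f₂ - (g₁ ^ 2 + b * g₂))
      + (1 - q ^ 2) * r ^ 2 * f₂ + q * (1 - q ^ 2) * b * (f₁ + g₁) ^ 2) := by
    rw [hQ, hr_def]; field_simp; ring
  have hq2 : 0 ≤ 1 - q ^ 2 := by nlinarith
  have hQ_nonpos : Q ≤ 0 := by
    refine nonpos_of_mul_nonpos_right ?_ hq0
    rw [hdecomp, neg_nonpos]
    have := sub_nonneg.2 hgf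
    positivity
  rw [hsplit]
  exact mul_nonpos_of_nonneg_of_nonpos (by positivity) hQ_nonpos

variable {E : Type*} [NormedAddCommGroup E] [InnerProductSpace ℝ E]

theorem HasDerivAt.norm {γ : ℝ → E} {γ' : E} {t : ℝ} (hγ : HasDerivAt γ γ' t)
    (h0 : γ t ≠ 0) : HasDerivAt (fun s => ‖γ s‖) (⟪γ t, γ'⟫ / ‖γ t‖) t := by
  have := hγ.norm_sq.sqrt (by positivity)
  simp only [Real.sqrt_sq (norm_nonneg _)] at this
  convert this using 1
  field_simp

theorem hasSecondDerivAt_norm_add_smul {x : E} (h : E) (hx : x ≠ 0) :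
    HasSecondDerivAt (fun t : ℝ => ‖x + t • h‖) (⟪x, h⟫ / ‖x‖)
      ((‖h‖ ^ 2 - (⟪x, h⟫ / ‖x‖) ^ 2) / ‖x‖) 0 := by
  have hline (s : ℝ) : HasDerivAt (fun t : ℝ => x + t • h) h s := by
    simpa using ((hasDerivAt_id s).smul_const h).const_add x
  have hx0 : x + (0 : ℝ) • h ≠ 0 := by simpa using hx
  have hne : ∀ᶠ s in 𝓝 (0 : ℝ), x + s • h ≠ 0 := (hline 0).continuousAt.eventually_ne hx0
  refine ⟨fun s => ⟪x + s • h, h⟫ / ‖x + s • h‖, hne.mono fun s hs => (hline s).norm hs,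
    by simp, ?_⟩
  have hinner := (hline 0).inner ℝ (hasDerivAt_const 0 h)
  refine (hinner.div ((hline 0).norm hx0) (norm_ne_zero_iff.2 hx0)).congr_deriv ?_
  simp only [zero_smul, add_zero, inner_zero_right, zero_add, real_inner_self_eq_norm_sq]
  field_simp

theorem sq_inner_div_norm_le (x h : E) : (⟪x, h⟫ / ‖x‖) ^ 2 ≤ ‖h‖ ^ 2 := by
  rw [← sq_abs, abs_div, abs_norm]
  gcongr
  exact div_le_of_le_mul₀ (norm_nonneg _) (norm_nonneg _)
    ((abs_real_inner_le_norm x h).trans_eq (mul_comm _ _))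

/-- Diagonal concavity of Burkholder's function: for `1 < p ≤ 2`,
`u(x,y) = p^(2-p) (‖y‖ - (1/(p-1))‖x‖)(‖x‖+‖y‖)^(p-1)`, and `x ≠ 0`, `y ≠ 0`,
`‖k‖ ≤ ‖h‖`, the function `G(t) = u(x+th, y+tk)` satisfies `G''(0) ≤ 0`. -/
theorem stmt_16 (p : ℝ) (hp1 : 1 < p) (hp2 : p ≤ 2)
    (x y h k : EuclideanSpace ℝ (Fin 2)) (hx : x ≠ 0) (hy : y ≠ 0)
    (hk : ‖k‖ ≤ ‖h‖) :
    deriv (deriv (fun t : ℝ =>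
        p ^ (2 - p) *
          ((‖y + t • k‖ - (1 / (p - 1)) * ‖x + t • h‖) *
            (‖x + t • h‖ + ‖y + t • k‖) ^ (p - 1)))) 0 ≤ 0 := by
  have ha : 0 < ‖x‖ := norm_pos_iff.2 hx
  have hb : 0 < ‖y‖ := norm_pos_iff.2 hy
  have hf := hasSecondDerivAt_norm_add_smul h hx
  have hg := hasSecondDerivAt_norm_add_smul k hy
  have hab : 0 < ‖x + (0 : ℝ) • h‖ + ‖y + (0 : ℝ) • k‖ := by
    simp only [zero_smul, add_zero]; positivity
  have hG := ((hg.sub (hf.const_mul (1 / (p - 1)))).mul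
    ((hf.add hg).rpow_const (p - 1) hab)).const_mul (p ^ (2 - p))
  rw [hG.deriv_deriv]
  simp only [zero_smul, add_zero]
  refine mul_nonpos_of_nonneg_of_nonpos (Real.rpow_nonneg (by linarith) _)
    (burkholder_second_variation_nonpos (by linarith) (by linarith) ha hb ?_ ?_)
  · exact div_nonneg (sub_nonneg.2 (sq_inner_div_norm_le x h)) ha.le
  · rw [mul_div_cancel₀ _ ha.ne', mul_div_cancel₀ _ hb.ne']
    simpa using pow_le_pow_left₀ (norm_nonneg k) hk 2
end

section
/- For 1 < p ≤ 2, a, b ≥ 0 with a + b > 0 and a > 0, the function φ(s,t) = (t - (1/(p-1))s)(s+t)^{p-1} defined for s > 0, t ≥ 0 satisfies (p-1)(s+t)^{3-p}·Δφ(s,t) ≤ 0, where Δφ = ∂²φ/∂s² + ∂²φ/∂t², at every point (s,t) with s > 0, t > 0 where t ≠ (1/(p-1))s. -/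
open Real Filter

private lemma rpow_deriv (q t x : ℝ) (hx : 0 < x + t) :
    HasDerivAt (fun x' : ℝ => (x' + t) ^ q) (q * (x + t) ^ (q - 1)) x := by
  have h := (Real.hasDerivAt_rpow_const (x := x + t) (p := q)
    (Or.inl (ne_of_gt hx))).comp x ((hasDerivAt_id x).add_const t)
  simpa [Function.comp_def] using h

private lemma rpow_deriv_t (q s x : ℝ) (hx : 0 < s + x) :
    HasDerivAt (fun x' : ℝ => (s + x') ^ q) (q * (s + x) ^ (q - 1)) x := by
  have h := (Real.hasDerivAt_rpow_const (x := s + x) (p := q)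
    (Or.inl (ne_of_gt hx))).comp x ((hasDerivAt_id x).const_add s)
  simpa [Function.comp_def] using h

private lemma first_deriv_s (p c t x : ℝ) (hx : 0 < x + t) :
    HasDerivAt (fun x' : ℝ => (t - c * x') * (x' + t) ^ (p - 1))
      (-c * (x + t) ^ (p - 1) + (t - c * x) * ((p - 1) * (x + t) ^ (p - 2))) x := by
  have h1 : HasDerivAt (fun x' : ℝ => t - c * x') (-c) x := by
    simpa using ((hasDerivAt_id x).const_mul c).const_sub t
  have h2 := rpow_deriv (p - 1) t x hx
  have e : p - 1 - 1 = p - 2 := by ring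
  rw [e] at h2
  simpa [Pi.mul_def] using h1.mul h2

private lemma first_deriv_t (p c s x : ℝ) (hx : 0 < s + x) :
    HasDerivAt (fun x' : ℝ => (x' - c * s) * (s + x') ^ (p - 1))
      (1 * (s + x) ^ (p - 1) + (x - c * s) * ((p - 1) * (s + x) ^ (p - 2))) x := by
  have h1 : HasDerivAt (fun x' : ℝ => x' - c * s) 1 x := by
    simpa using (hasDerivAt_id x).sub_const (c * s)
  have h2 := rpow_deriv_t (p - 1) s x hx
  have e : p - 1 - 1 = p - 2 := by ring
  rw [e] at h2
  simpa [Pi.mul_def] using h1.mul h2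

private lemma second_deriv_s (p c t s : ℝ) (hx : 0 < s + t) :
    HasDerivAt (fun x : ℝ => -c * (x + t) ^ (p - 1) + (t - c * x) * ((p - 1) * (x + t) ^ (p - 2)))
      (-c * ((p - 1) * (s + t) ^ (p - 2)) +
        (-c * ((p - 1) * (s + t) ^ (p - 2)) +
          (t - c * s) * ((p - 1) * ((p - 2) * (s + t) ^ (p - 3))))) s := by
  have h1 : HasDerivAt (fun x' : ℝ => t - c * x') (-c) s := by
    simpa using ((hasDerivAt_id s).const_mul c).const_sub t
  have h2 := rpow_deriv (p - 1) t s hx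
  have e1 : p - 1 - 1 = p - 2 := by ring
  rw [e1] at h2
  have h3 := rpow_deriv (p - 2) t s hx
  have e2 : p - 2 - 1 = p - 3 := by ring
  rw [e2] at h3
  have hA := h2.const_mul (-c)
  have hB := (h1.mul (h3.const_mul (p - 1)))
  exact hA.add hB

private lemma second_deriv_t (p c s t : ℝ) (hx : 0 < s + t) :
    HasDerivAt (fun x : ℝ => 1 * (s + x) ^ (p - 1) + (x - c * s) * ((p - 1) * (s + x) ^ (p - 2)))
      (1 * ((p - 1) * (s + t) ^ (p - 2)) +
        (1 * ((p - 1) * (s + t) ^ (p - 2)) +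
          (t - c * s) * ((p - 1) * ((p - 2) * (s + t) ^ (p - 3))))) t := by
  have h1 : HasDerivAt (fun x' : ℝ => x' - c * s) 1 t := by
    simpa using (hasDerivAt_id t).sub_const (c * s)
  have h2 := rpow_deriv_t (p - 1) s t hx
  have e1 : p - 1 - 1 = p - 2 := by ring
  rw [e1] at h2
  have h3 := rpow_deriv_t (p - 2) s t hx
  have e2 : p - 2 - 1 = p - 3 := by ring
  rw [e2] at h3
  have hA := h2.const_mul (1 : ℝ)
  have hB := (h1.mul (h3.const_mul (p - 1)))
  exact hA.add hB

/-- The radial profile `φ(s,t) = (t - (1/(p-1)) s)(s+t)^(p-1)` of Burkholder's function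
has nonpositive Laplacian on the open quadrant for `1 < p ≤ 2`, away from its zero set;
equivalently `(p-1)(s+t)^(3-p) Δφ(s,t) ≤ 0`. -/
theorem stmt_17 (p a b : ℝ) (hp1 : 1 < p) (hp2 : p ≤ 2)
    (ha : 0 ≤ a) (hb : 0 ≤ b) (hab : 0 < a + b) (ha' : 0 < a)
    (s t : ℝ) (hs : 0 < s) (ht : 0 < t) (hne : t ≠ (1 / (p - 1)) * s) :
    (deriv (fun s' : ℝ => deriv (fun s'' : ℝ =>
          (t - (1 / (p - 1)) * s'') * (s'' + t) ^ (p - 1)) s') s +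
        deriv (fun t' : ℝ => deriv (fun t'' : ℝ =>
          (t'' - (1 / (p - 1)) * s) * (s + t'') ^ (p - 1)) t') t ≤ 0) ∧
    (p - 1) * (s + t) ^ (3 - p) *
        (deriv (fun s' : ℝ => deriv (fun s'' : ℝ =>
            (t - (1 / (p - 1)) * s'') * (s'' + t) ^ (p - 1)) s') s +
          deriv (fun t' : ℝ => deriv (fun t'' : ℝ =>
            (t'' - (1 / (p - 1)) * s) * (s + t'') ^ (p - 1)) t') t) ≤ 0 := by
  set c : ℝ := 1 / (p - 1) with hc
  have hst : 0 < s + t := by linarith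
  have hp1' : p - 1 ≠ 0 := by linarith
  -- s-direction second derivative
  have hevs : (fun x => deriv (fun s'' : ℝ => (t - c * s'') * (s'' + t) ^ (p - 1)) x)
      =ᶠ[nhds s] fun x => -c * (x + t) ^ (p - 1) + (t - c * x) * ((p - 1) * (x + t) ^ (p - 2)) := by
    have hmem : ∀ᶠ x in nhds s, x ∈ Set.Ioi (-t) :=
      isOpen_Ioi.eventually_mem (by simp only [Set.mem_Ioi]; linarith)
    filter_upwards [hmem] with x hx
    exact (first_deriv_s p c t x (by simp only [Set.mem_Ioi] at hx; linarith)).deriv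
  have hDss : deriv (fun s' : ℝ => deriv (fun s'' : ℝ =>
        (t - c * s'') * (s'' + t) ^ (p - 1)) s') s =
      -c * ((p - 1) * (s + t) ^ (p - 2)) +
        (-c * ((p - 1) * (s + t) ^ (p - 2)) +
          (t - c * s) * ((p - 1) * ((p - 2) * (s + t) ^ (p - 3)))) := by
    rw [hevs.deriv_eq]
    exact (second_deriv_s p c t s hst).deriv
  -- t-direction second derivative
  have hevt : (fun x => deriv (fun t'' : ℝ => (t'' - c * s) * (s + t'') ^ (p - 1)) x)
      =ᶠ[nhds t] fun x => 1 * (s + x) ^ (p - 1) + (x - c * s) * ((p - 1) * (s + x) ^ (p - 2)) := by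
    have hmem : ∀ᶠ x in nhds t, x ∈ Set.Ioi (-s) :=
      isOpen_Ioi.eventually_mem (by simp only [Set.mem_Ioi]; linarith)
    filter_upwards [hmem] with x hx
    exact (first_deriv_t p c s x (by simp only [Set.mem_Ioi] at hx; linarith)).deriv
  have hDtt : deriv (fun t' : ℝ => deriv (fun t'' : ℝ =>
        (t'' - c * s) * (s + t'') ^ (p - 1)) t') t =
      1 * ((p - 1) * (s + t) ^ (p - 2)) +
        (1 * ((p - 1) * (s + t) ^ (p - 2)) +
          (t - c * s) * ((p - 1) * ((p - 2) * (s + t) ^ (p - 3)))) := by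
    rw [hevt.deriv_eq]
    exact (second_deriv_t p c s t hst).deriv
  -- the sum simplifies
  have e2 : (s + t) ^ (p - 2) = (s + t) ^ (p - 3) * (s + t) := by
    rw [show p - 2 = (p - 3) + 1 by ring, Real.rpow_add_one (ne_of_gt hst)]
  have hsum : deriv (fun s' : ℝ => deriv (fun s'' : ℝ =>
        (t - c * s'') * (s'' + t) ^ (p - 1)) s') s +
      deriv (fun t' : ℝ => deriv (fun t'' : ℝ =>
        (t'' - c * s) * (s + t'') ^ (p - 1)) t') t =
      2 * p * (p - 2) * t * (s + t) ^ (p - 3) := by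
    rw [hDss, hDtt, e2, hc]
    field_simp
    ring
  have hpow : 0 < (s + t) ^ (p - 3) := Real.rpow_pos_of_pos hst _
  have hle : 2 * p * (p - 2) * t * (s + t) ^ (p - 3) ≤ 0 := by
    have h1 : 2 * p * (p - 2) ≤ 0 := by nlinarith
    have h2 : 0 ≤ t * (s + t) ^ (p - 3) := le_of_lt (mul_pos ht hpow)
    calc 2 * p * (p - 2) * t * (s + t) ^ (p - 3)
        = (2 * p * (p - 2)) * (t * (s + t) ^ (p - 3)) := by ring
      _ ≤ 0 := mul_nonpos_of_nonpos_of_nonneg h1 h2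
  constructor
  · rw [hsum]; exact hle
  · have hfac : 0 ≤ (p - 1) * (s + t) ^ (3 - p) :=
      mul_nonneg (by linarith) (le_of_lt (Real.rpow_pos_of_pos hst _))
    rw [hsum]
    exact mul_nonpos_of_nonneg_of_nonpos hfac hle
end
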